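/- In a formal power series ring (or with x_i real/complex variables), the generating identity ∏_i (1 + v x_i)/(1 - u x_i) = 1 + (u+v) · Σ_{a,b ≥ 0} s_{(a|b)}(x) u^a v^b holds, where s_{(a|b)} denotes the Schur function indexed by the hook partition with Frobenius coordinates (a|b) = (a+1, 1^b). -/

import Mathlib

open MvPolynomial

/-- The hook Schur polynomial `s_{(a|b)} = s_{(a+1,1^b)}` in `N` variables,
via the dual Jacobi–Trudi expansion `s_{(a+1,1^b)} = Σ_{j=0}^{b} (-1)^j h_{a+1+j} e_{b-j}`. -/
noncomputable def hookSchur (N a b : ℕ) : MvPolynomial (Fin N) ℚ :=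
  ∑ j ∈ Finset.range (b + 1),
    (-1 : MvPolynomial (Fin N) ℚ) ^ j * hsymm (Fin N) ℚ (a + 1 + j) * esymm (Fin N) ℚ (b - j)

/-- The generating series `Σ_{a,b ≥ 0} s_{(a|b)}(x) u^a v^b`, as a formal power
series in `u = X 0`, `v = X 1` with coefficients symmetric polynomials in `x`. -/
noncomputable def hookSchurSeries (N : ℕ) :
    MvPowerSeries (Fin 2) (MvPolynomial (Fin N) ℚ) :=
  fun d => hookSchur N (d 0) (d 1)

/-! Write `E(v) = ∏ (1 + v xᵢ) = Σ e_b v^b` and `H(u) = ∏ (1 - u xᵢ)⁻¹ = Σ h_a u^a`, so that the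
left-hand side has coefficient `h_a e_b` at `u^a v^b`. Put
`T(a, b) = Σ_{j ≤ b} (-1)^j h_{a+j} e_{b-j}`, so that `s_{(a|b)} = T(a+1, b)`. The sum telescopes,
`T(a, b+1) + T(a+1, b) = h_a e_{b+1}`, and `T(0, b) = δ_{b,0}` is the coefficient form of
`H(-v) E(v) = 1`; comparing coefficients of `u^a v^b` gives the identity. The expansion of `H` is
proved by adjoining one variable at a time, using `h_{n+1}(x, y) = y h_n(x, y) + h_{n+1}(x)`. -/

open Finset

theorem PowerSeries.rescale_C {A : Type*} [CommSemiring A] (a c : A) :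
    rescale a (C c) = C c := by
  ext (_ | n) <;> simp [coeff_C]

namespace MvPowerSeries

theorem coeff_X_mul {σ A : Type*} [CommSemiring A] [DecidableEq σ] (k : σ)
    (f : MvPowerSeries σ A) (d : σ →₀ ℕ) :
    coeff d (X k * f) = if d k = 0 then 0 else coeff (d - Finsupp.single k 1) f := by
  simp only [X, coeff_monomial_mul, Finsupp.single_le_iff, one_mul]
  split_ifs <;> first | rfl | omega

section RenamePUnit

variable {τ A : Type*} [CommSemiring A]

theorem rename_punit_X_mul_C (k : τ) (c : A) :
    rename (Function.Embedding.punit k) (PowerSeries.X * PowerSeries.C c) = X k * C c := by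
  rw [map_mul, PowerSeries.X, PowerSeries.C, rename_X, rename_C]
  rfl

theorem coeff_rename_punit [DecidableEq τ] (k : τ) (f : PowerSeries A) (d : τ →₀ ℕ) :
    coeff d (rename (Function.Embedding.punit k) f) =
      if d = Finsupp.single k (d k) then PowerSeries.coeff (d k) f else 0 := by
  split_ifs with hd
  · obtain ⟨n, rfl⟩ : ∃ n, d = Finsupp.single k n := ⟨_, hd⟩
    have := coeff_embDomain_rename (Function.Embedding.punit k) f (Finsupp.single PUnit.unit n)
    rw [Finsupp.embDomain_single] at this
    rw [Finsupp.single_eq_same]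
    exact this
  · refine coeff_rename_eq_zero _ _ fun ⟨x, hx⟩ => hd ?_
    rw [← hx, Finsupp.unique_single x, Finsupp.mapDomain_single]
    change Finsupp.single k _ = Finsupp.single k (Finsupp.single k _ k)
    rw [Finsupp.single_eq_same]

theorem coeff_rename_punit_one_mul_rename_punit_zero (f g : PowerSeries A) (d : Fin 2 →₀ ℕ) :
    coeff d (rename (Function.Embedding.punit 1) f * rename (Function.Embedding.punit 0) g) =
      PowerSeries.coeff (d 1) f * PowerSeries.coeff (d 0) g := by
  have hd : Finsupp.single 1 (d 1) + Finsupp.single 0 (d 0) = d := by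
    ext i; fin_cases i <;> simp
  rw [coeff_mul, sum_eq_single (Finsupp.single 1 (d 1), Finsupp.single 0 (d 0))]
  · simp [coeff_rename_punit]
  · rintro ⟨p, q⟩ hpq hne
    rw [HasAntidiagonal.mem_antidiagonal] at hpq
    simp only [coeff_rename_punit]
    split_ifs with hp hq
    · obtain ⟨a, rfl⟩ : ∃ a, p = Finsupp.single 1 a := ⟨_, hp⟩
      obtain ⟨b, rfl⟩ : ∃ b, q = Finsupp.single 0 b := ⟨_, hq⟩
      subst hpq
      simp at hne
    all_goals simp
  · simp [hd]

end RenamePUnit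

end MvPowerSeries

section HookSum

variable {A : Type*} [CommRing A] (h e : ℕ → A)

def hookSum (a b : ℕ) : A := ∑ j ∈ range (b + 1), (-1) ^ j * h (a + j) * e (b - j)

theorem hookSum_zero_right (a : ℕ) : hookSum h e a 0 = h a * e 0 := by
  simp [hookSum]

theorem hookSum_succ_right_add (a b : ℕ) :
    hookSum h e a (b + 1) + hookSum h e (a + 1) b = h a * e (b + 1) := by
  rw [hookSum, sum_range_succ', add_right_comm, hookSum, ← sum_add_distrib,
    sum_eq_zero fun j _ => ?_]
  · simp
  · rw [Nat.add_sub_add_right, pow_succ, add_comm j 1, add_assoc]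
    ring

theorem mul_eq_hookSum_add (a b : ℕ) :
    h a * e b = hookSum h e a b + if b = 0 then 0 else hookSum h e (a + 1) (b - 1) := by
  cases b with
  | zero => simp [hookSum_zero_right]
  | succ b => simp [← hookSum_succ_right_add]

end HookSum

namespace MvPolynomial

theorem hsymm_option_succ {α R : Type*} [Fintype α] [DecidableEq α] [CommSemiring R] (n : ℕ) :
    hsymm (Option α) R (n + 1) =
      X none * hsymm (Option α) R n + rename some (hsymm α R (n + 1)) := by
  rw [hsymm, ← symOptionSuccEquiv.symm.sum_comp, Fintype.sum_sum_type, hsymm, hsymm, mul_sum,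
    map_sum]
  congr 1 <;> refine sum_congr rfl fun s _ => ?_
  · simp [symOptionSuccEquiv, Sym.coe_cons]
  · simp [symOptionSuccEquiv, Sym.coe_map, map_multiset_prod]

theorem one_sub_X_mul_C_X_none_mul_mk_hsymm {α R : Type*} [Fintype α] [DecidableEq α]
    [CommRing R] :
    (1 - PowerSeries.X * PowerSeries.C (X none : MvPolynomial (Option α) R)) *
        PowerSeries.mk (hsymm (Option α) R) =
      PowerSeries.map (rename (R := R) some).toRingHom (PowerSeries.mk (hsymm α R)) := by
  ext (_ | n)
  · simp [hsymm_zero]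
  · rw [sub_mul, one_mul, mul_assoc, map_sub, PowerSeries.coeff_succ_X_mul,
      PowerSeries.coeff_C_mul]
    simp [hsymm_option_succ]

theorem prod_one_sub_X_mul_C_X_mul_mk_hsymm (σ R : Type*) [Fintype σ] [DecidableEq σ]
    [CommRing R] :
    (∏ i : σ, (1 - PowerSeries.X * PowerSeries.C (X i : MvPolynomial σ R))) *
      PowerSeries.mk (hsymm σ R) = 1 := by
  -- `hsymm` depends on the `DecidableEq` instance, so the motive quantifies over it.
  have induction_principle := @Fintype.induction_empty_option (fun σ _ => ∀ [DecidableEq σ],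
    (∏ i : σ, (1 - PowerSeries.X * PowerSeries.C (X i : MvPolynomial σ R))) *
      PowerSeries.mk (hsymm σ R) = 1)
  refine induction_principle ?_ ?_ ?_ σ
  · intro α β _ e ih _
    let _ := Fintype.ofEquiv β e.symm
    let _ := Classical.decEq α
    have := congrArg (PowerSeries.map (rename (R := R) e).toRingHom) ih
    rw [map_mul, map_prod, map_one] at this
    convert this using 2
    · exact (e.prod_comp _).symm.trans (by simp)
    · ext n; simp [rename_hsymm]
  · intro _
    ext (_ | n)
    · simp [hsymm_zero]
    · simp [hsymm]
  · intro α _ ih inst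
    let _ := Classical.decEq α
    obtain rfl : inst = Option.instDecidableEq := Subsingleton.elim _ _
    rw [Fintype.prod_option, mul_right_comm, one_sub_X_mul_C_X_none_mul_mk_hsymm, mul_comm]
    simpa using congrArg (PowerSeries.map (rename (R := R) some).toRingHom) ih

theorem prod_one_add_X_mul_C_X {σ R : Type*} [Fintype σ] [CommSemiring R] :
    ∏ i : σ, (1 + PowerSeries.X * PowerSeries.C (X i : MvPolynomial σ R)) =
      PowerSeries.mk (esymm σ R) := by
  classical
  ext n
  simp_rw [prod_one_add, prod_mul_distrib, prod_const, ← map_prod, map_sum, mul_comm (_ ^ _),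
    PowerSeries.coeff_C_mul_X_pow, ← sum_filter, PowerSeries.coeff_mk, esymm,
    powersetCard_eq_filter, eq_comm (a := n)]

theorem sum_range_neg_one_pow_mul_hsymm_mul_esymm (σ R : Type*) [Fintype σ] [DecidableEq σ]
    [CommRing R] (n : ℕ) :
    ∑ j ∈ range (n + 1), (-1) ^ j * hsymm σ R j * esymm σ R (n - j) = if n = 0 then 1 else 0 := by
  have h := congrArg (PowerSeries.rescale (-1)) (prod_one_sub_X_mul_C_X_mul_mk_hsymm σ R)
  simp only [map_mul, map_prod, map_sub, map_one, PowerSeries.rescale_neg_one_X,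
    PowerSeries.rescale_C, PowerSeries.rescale_mk, neg_mul, sub_neg_eq_add,
    prod_one_add_X_mul_C_X] at h
  have := congrArg (PowerSeries.coeff n) h
  rw [mul_comm, PowerSeries.coeff_mul, Nat.sum_antidiagonal_eq_sum_range_succ
    (fun i j => PowerSeries.coeff i _ * PowerSeries.coeff j _)] at this
  simpa [mul_assoc] using this

theorem hsymm_mul_esymm_eq_hookSum {σ R : Type*} [Fintype σ] [DecidableEq σ] [CommRing R]
    (a b : ℕ) :
    hsymm σ R a * esymm σ R b =
      (if a = 0 ∧ b = 0 then 1 else 0) +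
        (if a = 0 then 0 else hookSum (hsymm σ R) (esymm σ R) a b) +
          if b = 0 then 0 else hookSum (hsymm σ R) (esymm σ R) (a + 1) (b - 1) := by
  rw [mul_eq_hookSum_add]
  rcases Nat.eq_zero_or_pos a with rfl | ha
  · simp [hookSum, sum_range_neg_one_pow_mul_hsymm_mul_esymm]
  · simp [ha.ne']

theorem prod_one_add_X_mul_C_X_eq_rename {σ R τ : Type*} [Fintype σ] [CommSemiring R] (k : τ) :
    ∏ i : σ, (1 + MvPowerSeries.X k * MvPowerSeries.C (X i : MvPolynomial σ R)) =
      MvPowerSeries.rename (Function.Embedding.punit k) (PowerSeries.mk (esymm σ R)) := by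
  simp only [← prod_one_add_X_mul_C_X, map_prod, map_add, map_one,
    MvPowerSeries.rename_punit_X_mul_C]

theorem prod_invOfUnit_one_sub_X_mul_C_X_eq_rename {σ R τ : Type*} [Fintype σ] [DecidableEq σ]
    [CommRing R] (k : τ) :
    ∏ i : σ, MvPowerSeries.invOfUnit
        (1 - MvPowerSeries.X k * MvPowerSeries.C (X i : MvPolynomial σ R)) 1 =
      MvPowerSeries.rename (Function.Embedding.punit k) (PowerSeries.mk (hsymm σ R)) := by
  refine left_inv_eq_right_inv
    (a := ∏ i : σ, (1 - MvPowerSeries.X k * MvPowerSeries.C (X i : MvPolynomial σ R))) ?_ ?_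
  · rw [← prod_mul_distrib]
    exact prod_eq_one fun i _ => MvPowerSeries.invOfUnit_mul _ _ (by simp)
  · have := congrArg (MvPowerSeries.rename (Function.Embedding.punit k))
      (prod_one_sub_X_mul_C_X_mul_mk_hsymm σ R)
    rw [map_mul, map_prod, map_one] at this
    simp only [map_sub, map_one, MvPowerSeries.rename_punit_X_mul_C] at this
    exact this

end MvPolynomial

theorem coeff_hookSchurSeries (N : ℕ) (d : Fin 2 →₀ ℕ) :
    MvPowerSeries.coeff d (hookSchurSeries N) = hookSchur N (d 0) (d 1) := rfl

theorem hookSchur_eq_hookSum (N a b : ℕ) :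
    hookSchur N a b = hookSum (hsymm (Fin N) ℚ) (esymm (Fin N) ℚ) (a + 1) b := rfl

/-- the hook Schur generating identity
`∏_i (1+v x_i)/(1-u x_i) = 1 + (u+v) Σ_{a,b≥0} s_{(a|b)}(x) u^a v^b`
as formal power series in `u = X 0`, `v = X 1` over symmetric polynomials. -/
theorem hook_schur_generating (N : ℕ) :
    (∏ i : Fin N,
        ((1 + MvPowerSeries.X 1 * MvPowerSeries.C (σ := Fin 2) (R := MvPolynomial (Fin N) ℚ) (X i)) *
          MvPowerSeries.invOfUnit
            (1 - MvPowerSeries.X 0 * MvPowerSeries.C (σ := Fin 2) (R := MvPolynomial (Fin N) ℚ) (X i)) 1)) =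
      1 + (MvPowerSeries.X 0 + MvPowerSeries.X 1) * hookSchurSeries N := by
  rw [prod_mul_distrib, prod_one_add_X_mul_C_X_eq_rename,
    prod_invOfUnit_one_sub_X_mul_C_X_eq_rename]
  ext d : 1
  rw [MvPowerSeries.coeff_rename_punit_one_mul_rename_punit_zero, PowerSeries.coeff_mk,
    PowerSeries.coeff_mk, mul_comm, hsymm_mul_esymm_eq_hookSum, map_add, add_mul, map_add,
    MvPowerSeries.coeff_X_mul, MvPowerSeries.coeff_X_mul, MvPowerSeries.coeff_one]
  simp only [coeff_hookSchurSeries, hookSchur_eq_hookSum, Finsupp.ext_iff, Fin.forall_fin_two]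
  simp +contextual [Nat.sub_one_add_one, add_assoc]
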